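/- arXiv:2405.05082 — 6 statements merged into one kernel-verified Lean document; each statement's English description precedes it below -/
import Mathlib

section
/- There exists a constant C > 0 such that for all integers n and all p with 2 ≤ p ≤ n − 1, one has P_2(p,n) ≤ C·p^2·2^{−n}, where the constant C does not depend on p. -/
open scoped Classical

noncomputable section

/-- The `{±1}`-vector in `ℝ^n` encoded by a Boolean vector. -/
def signVec {n : ℕ} (u : Fin n → Bool) : Fin n → ℝ := fun i => if u i then 1 else -1

/-- `v` is a `{±1}`-vector: all coordinates lie in `{-1, 1}`. -/
def IsPM {n : ℕ} (v : Fin n → ℝ) : Prop := ∀ i, v i = 1 ∨ v i = -1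

/-- The real span of the `{±1}`-vectors encoded by `W` contains a `{±1}`-vector different
from `±(W j)` for all `j`. -/
def KSOEvent {p n : ℕ} (W : Fin p → Fin n → Bool) : Prop :=
  ∃ x : Fin n → ℝ,
    x ∈ Submodule.span ℝ (Set.range fun j => signVec (W j)) ∧ IsPM x ∧
    ∀ j, x ≠ signVec (W j) ∧ x ≠ -signVec (W j)

/-- `ℙ(p, n)`: the probability that the real span of `p` uniformly random `{±1}`-vectors
in `ℝ^n` contains a `{±1}`-vector different from `±v_1, …, ±v_p`. -/
def probKSO (p n : ℕ) : ℝ :=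
  ((Finset.univ.filter fun W : Fin p → Fin n → Bool => KSOEvent W).card : ℝ) / 2 ^ (p * n)

/-- Some three of the vectors encoded by `W` have a real linear combination that is a
`{±1}`-vector different from `±` those three vectors. -/
def P3Event {p n : ℕ} (W : Fin p → Fin n → Bool) : Prop :=
  ∃ j₁ j₂ j₃ : Fin p, j₁ ≠ j₂ ∧ j₁ ≠ j₃ ∧ j₂ ≠ j₃ ∧
    ∃ a b c : ℝ, ∃ x : Fin n → ℝ,
      x = a • signVec (W j₁) + b • signVec (W j₂) + c • signVec (W j₃) ∧ IsPM x ∧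
      (x ≠ signVec (W j₁) ∧ x ≠ -signVec (W j₁)) ∧
      (x ≠ signVec (W j₂) ∧ x ≠ -signVec (W j₂)) ∧
      (x ≠ signVec (W j₃) ∧ x ≠ -signVec (W j₃))

/-- `ℙ₃(p, n)`: the probability of `P3Event` for `p` uniformly random `{±1}`-vectors in `ℝ^n`. -/
def probP3 (p n : ℕ) : ℝ :=
  ((Finset.univ.filter fun W : Fin p → Fin n → Bool => P3Event W).card : ℝ) / 2 ^ (p * n)

/-- Some `m` of the vectors encoded by `W` have a linear combination with all coefficients
nonzero that is a `{±1}`-vector. -/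
def PmEvent (m : ℕ) {p n : ℕ} (W : Fin p → Fin n → Bool) : Prop :=
  ∃ j : Fin m → Fin p, Function.Injective j ∧
    ∃ α : Fin m → ℝ, (∀ i, α i ≠ 0) ∧ IsPM (∑ i, α i • signVec (W (j i)))

/-- `ℙ_m(p, n)`: the probability of `PmEvent m` for `p` uniformly random `{±1}`-vectors
in `ℝ^n`. -/
def probPm (m p n : ℕ) : ℝ :=
  ((Finset.univ.filter fun W : Fin p → Fin n → Bool => PmEvent m W).card : ℝ) / 2 ^ (p * n)

/-- `𝓜_m(p, n)`: the set of `p × n` `{±1}`-matrices (encoded row-wise by Booleans) with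
linearly independent rows, some `m` of which have a linear combination with nonzero
coefficients that is a `{±1}`-vector. -/
def MmSet (m p n : ℕ) : Finset (Fin p → Fin n → Bool) :=
  Finset.univ.filter fun M =>
    (LinearIndependent ℝ fun i => signVec (M i)) ∧ PmEvent m M

/-- `R_m(p, n) = |𝓜_m(p, n)| / 2^(p n)`. -/
def Rm (m p n : ℕ) : ℝ := ((MmSet m p n).card : ℝ) / 2 ^ (p * n)

/-- `ℙ_{p,n}`: the probability that a uniformly random `p × n` `{±1}`-matrix has rank
less than `p`, i.e. its rows are linearly dependent over `ℝ`. -/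
def probSingular (p n : ℕ) : ℝ :=
  ((Finset.univ.filter fun M : Fin p → Fin n → Bool =>
      ¬ LinearIndependent ℝ fun i => signVec (M i)).card : ℝ) / 2 ^ (p * n)

/-- The vector `(1, b_1, …, b_n) ∈ E_n ⊂ ℝ^{n+1}` encoded by a Boolean vector. -/
def eVec {n : ℕ} (u : Fin n → Bool) : Fin (n + 1) → ℝ := Fin.cons 1 (signVec u)

/-- The number of ordered `n`-tuples of distinct, linearly independent vectors from `E_n`
whose real span contains a `{±1}`-vector of `ℝ^{n+1}` different from `±w_1, …, ±w_n`. -/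
def KSOECard (n : ℕ) : ℕ :=
  (Finset.univ.filter fun W : Fin n → (Fin n → Bool) =>
    Function.Injective W ∧ (LinearIndependent ℝ fun i => eVec (W i)) ∧
    ∃ x : Fin (n + 1) → ℝ,
      x ∈ Submodule.span ℝ (Set.range fun i => eVec (W i)) ∧ IsPM x ∧
      ∀ i, x ≠ eVec (W i) ∧ x ≠ -eVec (W i)).card

/-- `P(2, n)`: the number of threshold functions of `n` variables. -/
def numThreshold (n : ℕ) : ℕ :=
  (Finset.univ.filter fun f : (Fin n → Bool) → Bool =>
    ∃ a : ℝ, ∃ w : Fin n → ℝ,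
      ∀ x, f x = true ↔ 0 < a + ∑ i, w i * signVec x i).card

lemma signVec_sq {n : ℕ} (u : Fin n → Bool) (i : Fin n) : signVec u i ^ 2 = 1 := by
  unfold signVec; split <;> norm_num

/-- If two `±1` vectors have a nonzero combination that is a `±1` vector, they are equal
or opposite. -/
lemma pm2_structure {p n : ℕ} (W : Fin p → Fin n → Bool) (h : PmEvent 2 W) :
    ∃ j k : Fin p, j ≠ k ∧ (W j = W k ∨ W j = fun i => !(W k i)) := by
  obtain ⟨j, hjinj, α, hα, hPM⟩ := h
  have hj01 : j 0 ≠ j 1 := fun h => by simpa using hjinj h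
  refine ⟨j 0, j 1, hj01, ?_⟩
  set a := α 0 with ha'
  set b := α 1 with hb'
  have hx : ∀ i : Fin n,
      a * signVec (W (j 0)) i + b * signVec (W (j 1)) i = 1 ∨
      a * signVec (W (j 0)) i + b * signVec (W (j 1)) i = -1 := by
    intro i
    have h' := hPM i
    rw [Fin.sum_univ_two] at h'
    simpa using h'
  have hab : a * b ≠ 0 := mul_ne_zero (hα 0) (hα 1)
  have keyEq : ∀ i : Fin n, W (j 0) i = W (j 1) i → (a + b) ^ 2 = 1 := by
    intro i he
    have h1 := hx i
    have hs := signVec_sq (W (j 0)) i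
    have hv : signVec (W (j 1)) i = signVec (W (j 0)) i := by
      simp only [signVec, he]
    rw [hv] at h1
    rcases h1 with h1 | h1 <;> nlinarith [hs, h1]
  have keyNe : ∀ i : Fin n, W (j 0) i ≠ W (j 1) i → (a - b) ^ 2 = 1 := by
    intro i he
    have h1 := hx i
    have hs := signVec_sq (W (j 0)) i
    have hv : signVec (W (j 1)) i = - signVec (W (j 0)) i := by
      cases h0 : W (j 0) i <;> cases h1' : W (j 1) i <;> simp_all [signVec]
    rw [hv] at h1
    rcases h1 with h1 | h1 <;> nlinarith [hs, h1]
  by_cases hcase : ∀ i, W (j 0) i = W (j 1) i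
  · exact Or.inl (funext hcase)
  · push_neg at hcase
    obtain ⟨i0, hi0⟩ := hcase
    have h2 := keyNe i0 hi0
    refine Or.inr (funext fun i => ?_)
    by_cases he : W (j 0) i = W (j 1) i
    · exact absurd (by nlinarith [keyEq i he] : a * b = 0) hab
    · cases h0 : W (j 0) i <;> cases h1' : W (j 1) i <;> simp_all

/-- Counting: tuples where coordinate `j` is a fixed function of coordinate `k`. -/
lemma count_dep {p n : ℕ} (j k : Fin p) (hjk : j ≠ k) (g : (Fin n → Bool) → (Fin n → Bool)) :
    (Finset.univ.filter fun W : Fin p → Fin n → Bool => W j = g (W k)).card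
      = (2 ^ n) ^ (p - 1) := by
  rw [← Fintype.card_subtype]
  have hkj : (k : Fin p) ≠ j := fun h => hjk h.symm
  have e : {W : Fin p → Fin n → Bool // W j = g (W k)} ≃
      ({i : Fin p // i ≠ j} → (Fin n → Bool)) :=
    { toFun := fun W i => W.1 i.1
      invFun := fun f => ⟨fun i => if h : i = j then g (f ⟨k, hkj⟩) else f ⟨i, h⟩, by
        simp [hkj]⟩
      left_inv := fun W => by
        ext i x
        by_cases h : i = j
        · subst h; simp [W.2]
        · simp [h]
      right_inv := fun f => by
        ext i x
        simp [i.2] }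
  rw [Fintype.card_congr e, Fintype.card_fun]
  congr 1
  · simp [Fintype.card_fun]
  · rw [Fintype.card_subtype_compl, Fintype.card_subtype_eq, Fintype.card_fin]

lemma pm2_card_bound {p n : ℕ} :
    (Finset.univ.filter fun W : Fin p → Fin n → Bool => PmEvent 2 W).card
      ≤ 2 * p ^ 2 * (2 ^ n) ^ (p - 1) := by
  classical
  set S := Finset.univ.filter fun W : Fin p → Fin n → Bool => PmEvent 2 W with hS
  set Pairs := Finset.univ.filter fun jk : Fin p × Fin p => jk.1 ≠ jk.2 with hPairs
  have hsub : S ⊆ Pairs.biUnion (fun jk =>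
      Finset.univ.filter fun W : Fin p → Fin n → Bool =>
        W jk.1 = W jk.2 ∨ W jk.1 = fun i => !(W jk.2 i)) := by
    intro W hW
    simp only [hS, Finset.mem_filter, Finset.mem_univ, true_and] at hW
    obtain ⟨j, k, hjk, hor⟩ := pm2_structure W hW
    simp only [Finset.mem_biUnion, hPairs, Finset.mem_filter, Finset.mem_univ, true_and]
    exact ⟨(j, k), hjk, hor⟩
  have hterm : ∀ jk ∈ Pairs,
      (Finset.univ.filter fun W : Fin p → Fin n → Bool =>
        W jk.1 = W jk.2 ∨ W jk.1 = fun i => !(W jk.2 i)).card ≤ 2 * (2 ^ n) ^ (p - 1) := by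
    intro jk hjk
    simp only [hPairs, Finset.mem_filter, Finset.mem_univ, true_and] at hjk
    have h1 := count_dep (n := n) jk.1 jk.2 hjk (fun u => u)
    have h2 := count_dep (n := n) jk.1 jk.2 hjk (fun u i => !(u i))
    calc (Finset.univ.filter fun W : Fin p → Fin n → Bool =>
            W jk.1 = W jk.2 ∨ W jk.1 = fun i => !(W jk.2 i)).card
        ≤ (Finset.univ.filter fun W : Fin p → Fin n → Bool => W jk.1 = W jk.2).card
          + (Finset.univ.filter fun W : Fin p → Fin n → Bool =>
              W jk.1 = fun i => !(W jk.2 i)).card := by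
          rw [Finset.filter_or]; exact Finset.card_union_le _ _
      _ ≤ 2 * (2 ^ n) ^ (p - 1) := by
          rw [two_mul]
          exact Nat.add_le_add (le_of_eq h1) (le_of_eq h2)
  calc S.card ≤ ∑ jk ∈ Pairs, (Finset.univ.filter fun W : Fin p → Fin n → Bool =>
        W jk.1 = W jk.2 ∨ W jk.1 = fun i => !(W jk.2 i)).card :=
      le_trans (Finset.card_le_card hsub) (Finset.card_biUnion_le)
    _ ≤ ∑ _jk ∈ Pairs, 2 * (2 ^ n) ^ (p - 1) := Finset.sum_le_sum hterm
    _ = Pairs.card * (2 * (2 ^ n) ^ (p - 1)) := by rw [Finset.sum_const, smul_eq_mul]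
    _ ≤ (p ^ 2) * (2 * (2 ^ n) ^ (p - 1)) := by
        apply Nat.mul_le_mul_right
        calc Pairs.card ≤ (Finset.univ : Finset (Fin p × Fin p)).card :=
            Finset.card_filter_le _ _
          _ = p ^ 2 := by simp [sq]
    _ = 2 * p ^ 2 * (2 ^ n) ^ (p - 1) := by ring

/-- there is `C > 0` such that for all `n` and `2 ≤ p ≤ n - 1`,
`ℙ₂(p,n) ≤ C p² 2^{-n}`. -/
theorem stmt3 :
    ∃ C : ℝ, 0 < C ∧ ∀ n p : ℕ, 2 ≤ p → p + 1 ≤ n →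
      probPm 2 p n ≤ C * (p : ℝ) ^ 2 / 2 ^ n := by
  refine ⟨2, by norm_num, fun n p hp hpn => ?_⟩
  have hb := pm2_card_bound (p := p) (n := n)
  have hbR : ((Finset.univ.filter fun W : Fin p → Fin n → Bool => PmEvent 2 W).card : ℝ)
      ≤ 2 * (p : ℝ) ^ 2 * (2 ^ n) ^ (p - 1) := by
    calc ((Finset.univ.filter fun W : Fin p → Fin n → Bool => PmEvent 2 W).card : ℝ)
        ≤ ((2 * p ^ 2 * (2 ^ n) ^ (p - 1) : ℕ) : ℝ) := by exact_mod_cast hb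
      _ = 2 * (p : ℝ) ^ 2 * (2 ^ n) ^ (p - 1) := by push_cast; ring
  have hpow : ((2 : ℝ) ^ n) ^ (p - 1) * 2 ^ n = 2 ^ (p * n) := by
    rw [← pow_mul, ← pow_add]
    congr 1
    have : p - 1 + 1 = p := by omega
    calc n * (p - 1) + n = (p - 1 + 1) * n := by ring
      _ = p * n := by rw [this]
  rw [probPm, div_le_div_iff₀ (by positivity) (by positivity)]
  calc ((Finset.univ.filter fun W : Fin p → Fin n → Bool => PmEvent 2 W).card : ℝ) * 2 ^ n
      ≤ (2 * (p : ℝ) ^ 2 * (2 ^ n) ^ (p - 1)) * 2 ^ n := by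
        apply mul_le_mul_of_nonneg_right hbR (by positivity)
    _ = 2 * (p : ℝ) ^ 2 * ((2 ^ n) ^ (p - 1) * 2 ^ n) := by ring
    _ = 2 * (p : ℝ) ^ 2 * 2 ^ (p * n) := by rw [hpow]
end
end

section
/- There exists a constant C > 0 such that for all integers n and all p with 4 ≤ p ≤ n − 1, one has P_4(p,n) ≤ C·p^4·2^{−n}, where the constant C does not depend on p. -/
open scoped Classical

noncomputable section

/-!
Fix the four chosen rows (at most `p⁴` choices). If `∑ αᵢ vᵢ` is a `{±1}`-vector with all
`αᵢ ≠ 0`, every column `c ∈ {±1}⁴` of these rows satisfies `⟨α, c⟩ = ±1`, and at most 8 of the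
16 sign patterns do: if some `|αᵢ| ≠ 1`, flipping the `i`-th sign of a solution never gives a
solution, and if all `|αᵢ| = 1`, then `⟨α, c⟩` is an even integer. Hence the columns of the four
rows all lie in one of at most `2^16` sets of at most 8 patterns, an event of probability at most
`2^16 · 2^{-n}`. The same argument bounds `P_m` for every even `m`.
-/
open Finset Matrix

section Counting

variable {ι κ β : Type*} [Fintype ι] [Fintype κ] [Fintype β]

lemma card_filter_forall_apply_mem [DecidableEq ι] [DecidableEq κ] (S : Finset (ι → β))
    [DecidablePred fun V : ι → κ → β => ∀ k, (fun i => V i k) ∈ S] :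
    #{V : ι → κ → β | ∀ k, (fun i => V i k) ∈ S} = #S ^ Fintype.card κ := by
  have : ({V : ι → κ → β | ∀ k, (fun i => V i k) ∈ S} : Finset _) =
      (Fintype.piFinset fun _ : κ => S).map
        (Equiv.piComm fun (_ : κ) (_ : ι) => β).toEmbedding := by
    ext V
    simp [Fintype.mem_piFinset, Equiv.piComm]
  rw [this, card_map, Fintype.card_piFinset, prod_const, card_univ]

lemma card_filter_comp_mem_le [DecidableEq κ] [DecidableEq β] (j : ι ↪ κ) (s : Finset (ι → β)) :
    #{W : κ → β | W ∘ j ∈ s} ≤ #s * Fintype.card β ^ (Fintype.card κ - Fintype.card ι) := by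
  calc #{W : κ → β | W ∘ j ∈ s}
      ≤ #(s ×ˢ (univ : Finset ({k // k ∉ Set.range j} → β))) := by
        refine card_le_card_of_injOn (fun W => (W ∘ j, fun k => W k)) ?_ ?_
        · intro W hW
          simpa using hW
        · intro W _ W' _ h
          funext k
          by_cases hk : k ∈ Set.range j
          · obtain ⟨i, rfl⟩ := hk
            exact congrFun (congrArg Prod.fst h) i
          · exact congrFun (congrArg Prod.snd h) ⟨k, hk⟩
    _ = #s * Fintype.card β ^ (Fintype.card κ - Fintype.card ι) := by
        rw [card_product, card_univ, Fintype.card_fun, Fintype.card_subtype_compl,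
          Set.card_range_of_injective j.injective]

end Counting

section SignVectors

variable {m : ℕ}

lemma IsPM.exists_sum_eq_two_mul (hm : Even m) {x : Fin m → ℝ} (hx : IsPM x) :
    ∃ k : ℤ, ∑ i, x i = 2 * k := by
  obtain ⟨r, rfl⟩ := hm
  refine ⟨∑ i, (if x i = 1 then 1 else 0 : ℤ) - r, ?_⟩
  have hx' : ∀ i, x i = 2 * ((if x i = 1 then 1 else 0 : ℤ) : ℝ) - 1 := by
    intro i
    rcases hx i with h | h <;> norm_num [h]
  rw [sum_congr rfl fun i _ => hx' i]
  push_cast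
  rw [sum_sub_distrib, ← mul_sum]
  simp only [sum_boole, sum_const, card_univ, Fintype.card_fin, nsmul_eq_mul, Nat.cast_add, mul_one]
  ring

lemma signVec_apply_eq_or (c : Fin m → Bool) (i : Fin m) :
    signVec c i = 1 ∨ signVec c i = -1 := by
  unfold signVec
  split <;> simp

lemma dotProduct_signVec_sub_update_not (α : Fin m → ℝ) (c : Fin m → Bool) (i : Fin m) :
    α ⬝ᵥ signVec c - α ⬝ᵥ signVec (Function.update c i (!c i)) = 2 * α i * signVec c i := by
  rw [← dotProduct_sub, dotProduct, sum_eq_single i]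
  · cases hc : c i <;> simp [signVec, hc] <;> ring
  · intro j _ hj
    simp [signVec, Function.update_of_ne hj]
  · simp

theorem two_mul_card_dotProduct_signVec_eq_one_or_le (hm : Even m) {α : Fin m → ℝ}
    (hα : ∀ i, α i ≠ 0) :
    2 * #{c : Fin m → Bool | α ⬝ᵥ signVec c = 1 ∨ α ⬝ᵥ signVec c = -1} ≤ 2 ^ m := by
  set T : Finset (Fin m → Bool) := {c | α ⬝ᵥ signVec c = 1 ∨ α ⬝ᵥ signVec c = -1}
  by_cases hunit : ∀ i, α i = 1 ∨ α i = -1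
  · have hT : T = ∅ := by
      refine eq_empty_of_forall_notMem fun c hc => ?_
      have hpm : IsPM fun i => α i * signVec c i := fun i => by
        rcases hunit i with h | h <;> rcases signVec_apply_eq_or c i with h' | h' <;>
          simp [h, h']
      obtain ⟨k, hk⟩ := hpm.exists_sum_eq_two_mul hm
      rw [← dotProduct] at hk
      rw [mem_filter, hk] at hc
      rcases hc.2 with h | h <;> norm_cast at h <;> omega
    simp [hT]
  push Not at hunit
  obtain ⟨i, hi₁, hi₂⟩ := hunit
  have hflip : Function.Involutive fun c : Fin m → Bool => Function.update c i (!c i) := by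
    intro c
    simp
  have hout : ∀ c ∈ T, Function.update c i (!c i) ∉ T := by
    intro c hc hc'
    have hdiff := dotProduct_signVec_sub_update_not α c i
    simp only [T, mem_filter, mem_univ, true_and] at hc hc'
    rcases hc with hc | hc <;> rcases hc' with hc' | hc' <;>
      rcases signVec_apply_eq_or c i with hs | hs <;> rw [hc, hc', hs] at hdiff
    all_goals first
      | exact hα i (by linarith)
      | exact hi₁ (by linarith)
      | exact hi₂ (by linarith)
  have hdisj : Disjoint T (T.map hflip.toPerm.toEmbedding) := by
    rw [disjoint_left]
    intro c hc hc'
    obtain ⟨d, hd, rfl⟩ := mem_map.1 hc'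
    exact hout d hd hc
  calc 2 * #T = #(T ∪ T.map hflip.toPerm.toEmbedding) := by
        rw [card_union_of_disjoint hdisj, card_map]
        ring
    _ ≤ 2 ^ m := card_le_univ _ |>.trans (by simp)

end SignVectors

def HasPMCombination {m n : ℕ} (V : Fin m → Fin n → Bool) : Prop :=
  ∃ α : Fin m → ℝ, (∀ i, α i ≠ 0) ∧ IsPM (∑ i, α i • signVec (V i))

lemma sum_smul_signVec_apply {m n : ℕ} (α : Fin m → ℝ) (V : Fin m → Fin n → Bool) (k : Fin n) :
    (∑ i, α i • signVec (V i)) k = α ⬝ᵥ signVec fun i => V i k := by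
  simp [Finset.sum_apply, dotProduct, signVec]

theorem card_hasPMCombination_mul_le {m : ℕ} (hm : Even m) (n : ℕ) :
    #{V : Fin m → Fin n → Bool | HasPMCombination V} * 2 ^ n ≤ 2 ^ 2 ^ m * 2 ^ (m * n) := by
  set F : Finset (Finset (Fin m → Bool)) := {S | 2 * #S ≤ 2 ^ m}
  have hsub : ({V : Fin m → Fin n → Bool | HasPMCombination V} : Finset _) ⊆
      F.biUnion fun S => {V | ∀ k, (fun i => V i k) ∈ S} := by
    intro V hV
    obtain ⟨α, hα, hpm⟩ := (mem_filter.1 hV).2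
    refine mem_biUnion.2
      ⟨({c | α ⬝ᵥ signVec c = 1 ∨ α ⬝ᵥ signVec c = -1} : Finset (Fin m → Bool)), ?_, ?_⟩
    · simpa [F] using two_mul_card_dotProduct_signVec_eq_one_or_le hm hα
    · simp only [mem_filter, mem_univ, true_and]
      intro k
      rw [← sum_smul_signVec_apply]
      exact hpm k
  calc #{V : Fin m → Fin n → Bool | HasPMCombination V} * 2 ^ n
      ≤ (∑ S ∈ F, #S ^ n) * 2 ^ n := by
        gcongr
        refine (card_le_card hsub).trans (card_biUnion_le.trans_eq ?_)
        exact sum_congr rfl fun S _ => by rw [card_filter_forall_apply_mem, Fintype.card_fin]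
    _ = ∑ S ∈ F, (2 * #S) ^ n := by
        rw [sum_mul]
        exact sum_congr rfl fun S _ => by ring
    _ ≤ ∑ _S ∈ F, (2 ^ m) ^ n :=
        sum_le_sum fun S hS => Nat.pow_le_pow_left (mem_filter.1 hS).2 n
    _ ≤ 2 ^ 2 ^ m * 2 ^ (m * n) := by
        rw [sum_const, smul_eq_mul, ← pow_mul]
        gcongr
        exact (card_le_univ F).trans (by simp)

lemma card_pmEvent_le (m p n : ℕ) :
    #{W : Fin p → Fin n → Bool | PmEvent m W} ≤
      p ^ m * (#{V : Fin m → Fin n → Bool | HasPMCombination V} * (2 ^ n) ^ (p - m)) := by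
  have hsub : ({W : Fin p → Fin n → Bool | PmEvent m W} : Finset _) ⊆
      (univ : Finset (Fin m ↪ Fin p)).biUnion fun j =>
        {W | W ∘ j ∈ ({V | HasPMCombination V} : Finset (Fin m → Fin n → Bool))} := by
    intro W hW
    obtain ⟨j, hj, hcomb⟩ := (mem_filter.1 hW).2
    exact mem_biUnion.2
      ⟨⟨j, hj⟩, mem_univ _, mem_filter.2 ⟨mem_univ _, mem_filter.2 ⟨mem_univ _, hcomb⟩⟩⟩
  calc _ ≤ _ := card_le_card hsub
    _ ≤ _ := card_biUnion_le
    _ ≤ ∑ _j : Fin m ↪ Fin p,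
          #{V : Fin m → Fin n → Bool | HasPMCombination V} * (2 ^ n) ^ (p - m) :=
        sum_le_sum fun j _ => by
          have := card_filter_comp_mem_le j
            ({V | HasPMCombination V} : Finset (Fin m → Fin n → Bool))
          simpa only [Fintype.card_fun, Fintype.card_fin, Fintype.card_bool] using this
    _ ≤ _ := by
        rw [sum_const, smul_eq_mul, card_univ, Fintype.card_embedding_eq]
        gcongr
        simpa using Nat.descFactorial_le_pow p m

theorem probPm_le_of_even {m p : ℕ} (hm : Even m) (hmp : m ≤ p) (n : ℕ) :
    probPm m p n ≤ 2 ^ 2 ^ m * (p : ℝ) ^ m / 2 ^ n := by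
  have hcount : #{W : Fin p → Fin n → Bool | PmEvent m W} * 2 ^ n ≤
      2 ^ 2 ^ m * p ^ m * 2 ^ (p * n) :=
    calc _ ≤ p ^ m * (#{V : Fin m → Fin n → Bool | HasPMCombination V} * 2 ^ n)
            * (2 ^ n) ^ (p - m) :=
          (Nat.mul_le_mul_right _ (card_pmEvent_le m p n)).trans_eq (by ring)
      _ ≤ p ^ m * (2 ^ 2 ^ m * (2 ^ n) ^ m) * (2 ^ n) ^ (p - m) := by
          have := card_hasPMCombination_mul_le hm n
          rw [mul_comm m n, pow_mul] at this
          gcongr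
      _ = 2 ^ 2 ^ m * p ^ m * 2 ^ (p * n) := by
          rw [mul_comm p n, pow_mul, ← Nat.sub_add_cancel hmp, pow_add, Nat.add_sub_cancel]
          ring
  rw [probPm, div_le_div_iff₀ (by positivity) (by positivity)]
  exact_mod_cast hcount

/-- there is `C > 0` such that for all `n` and `4 ≤ p ≤ n - 1`,
`ℙ₄(p,n) ≤ C p⁴ 2^{-n}`. -/
theorem stmt4 :
    ∃ C : ℝ, 0 < C ∧ ∀ n p : ℕ, 4 ≤ p → p + 1 ≤ n →
      probPm 4 p n ≤ C * (p : ℝ) ^ 4 / 2 ^ n :=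
  ⟨2 ^ 2 ^ 4, by positivity, fun n _ hp _ => probPm_le_of_even ⟨2, rfl⟩ hp n⟩
end
end

section
/- Fix ε with 0 < ε < 1/100 and c ≥ 7.36. Then for every δ > 0 there exists an integer N such that for all n ≥ N and all integers m, p with ε^2·n < m ≤ n − c·n/log_2 n and m ≤ p ≤ n − 1, one has R_m(p,n) ≤ δ·(5/8)^n. -/
/-
Count the matrices in `𝓜_m(p, n)`. Pick the `m` rows carrying the `{±1}` combination
(at most `2^p` ways). Their `m × n` submatrix has rank `m`, so some `m` of its columns form
an invertible minor `C`; the minor and the signs of the combination on those columns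
determine the coefficient vector `α`. Every other column is a `{±1}`-vector `u` with
`∑ αᵢ uᵢ = ±1`, and by Erdős's Littlewood–Offord bound (Sperner's theorem) there are at
most `2 binom(m, m/2) ≤ 2^(m+1) / √(m+1)` of them. Altogether
`R_m(p, n) ≤ 8^n / (m+1)^((n-m)/2)`.

When `n - m ≥ c n / log₂ n` and `m > ε² n`, the denominator is at least
`2^((c/2)(1 - o(1)) n)`, and `c/2 ≥ 3.68 > log₂ (64/5)`, so it beats `(64/5)^n`.
-/

open scoped Classical

noncomputable section

open Finset Filter Real
open scoped Matrix

def signDot {m : ℕ} (α : Fin m → ℝ) (u : Fin m → Bool) : ℝ := signVec u ⬝ᵥ α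

lemma signDot_eq_two_mul_sum_sub {m : ℕ} (α : Fin m → ℝ) (u : Fin m → Bool) :
    signDot α u = 2 * ∑ i ∈ univ.filter (fun i => u i), α i - ∑ i, α i := by
  rw [signDot, dotProduct, sum_filter, mul_sum, ← sum_sub_distrib]
  refine sum_congr rfl fun i _ => ?_
  cases h : u i <;> simp [signVec, h]; ring

/-- Erdős's Littlewood–Offord argument: for positive weights the supports of the solutions
form an antichain, so Sperner's theorem applies. -/
lemma card_signDot_eq_le_of_pos {m : ℕ} {α : Fin m → ℝ} (hα : ∀ i, 0 < α i) (t : ℝ) :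
    #{u | signDot α u = t} ≤ m.choose (m / 2) := by
  set support : (Fin m → Bool) → Finset (Fin m) := fun u => univ.filter (fun i => u i)
  have support_inj : Function.Injective support := fun u v h => by
    funext i
    simpa [support] using Finset.ext_iff.1 h i
  have antichain : IsAntichain (· ⊆ ·) (((univ.filter fun u => signDot α u = t).image support :
      Finset (Finset (Fin m))) : Set (Finset (Fin m))) := by
    simp only [coe_image, coe_filter, mem_univ, true_and]
    rintro _ ⟨u, hu, rfl⟩ _ ⟨v, hv, rfl⟩ hne hsub
    have hssub : support u ⊂ support v := hsub.ssubset_of_ne hne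
    have hsum : ∑ i ∈ support u, α i = ∑ i ∈ support v, α i := by
      have := signDot_eq_two_mul_sum_sub α u
      have := signDot_eq_two_mul_sum_sub α v
      simp only [Set.mem_ofPred_eq] at hu hv
      linarith
    obtain ⟨i, hiv, hiu⟩ := exists_of_ssubset hssub
    have : 0 < ∑ i ∈ support v \ support u, α i :=
      sum_pos (fun i _ => hα i) ⟨i, mem_sdiff.2 ⟨hiv, hiu⟩⟩
    linarith [sum_sdiff hsub (f := α)]
  simpa [card_image_of_injective _ support_inj] using antichain.sperner

def flipNeg {m : ℕ} (α : Fin m → ℝ) : Equiv.Perm (Fin m → Bool) :=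
  Function.Involutive.toPerm (fun u i => xor (u i) (decide (α i < 0))) fun u => by
    funext i; simp

lemma flipNeg_apply {m : ℕ} (α : Fin m → ℝ) (u : Fin m → Bool) (i : Fin m) :
    flipNeg α u i = xor (u i) (decide (α i < 0)) := rfl

lemma signDot_abs_flipNeg {m : ℕ} {α : Fin m → ℝ} (hα : ∀ i, α i ≠ 0) (u : Fin m → Bool) :
    signDot (fun i => |α i|) (flipNeg α u) = signDot α u := by
  unfold signDot dotProduct
  refine sum_congr rfl fun i _ => ?_
  rcases (hα i).lt_or_gt with h | h
  · cases hu : u i <;> simp [flipNeg_apply, signVec, hu, h, abs_of_neg h]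
  · cases hu : u i <;> simp [flipNeg_apply, signVec, hu, h.not_gt, abs_of_pos h]

lemma card_signDot_eq_le {m : ℕ} {α : Fin m → ℝ} (hα : ∀ i, α i ≠ 0) (t : ℝ) :
    #{u | signDot α u = t} ≤ m.choose (m / 2) := by
  rw [card_equiv (flipNeg α) (t := univ.filter fun u => signDot (fun i => |α i|) u = t)
    (by simp [signDot_abs_flipNeg hα])]
  exact card_signDot_eq_le_of_pos (fun i => abs_pos.2 (hα i)) t

def pmFiber {m : ℕ} (α : Fin m → ℝ) : Finset (Fin m → Bool) :=
  {u | signDot α u = 1 ∨ signDot α u = -1}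

lemma card_pmFiber_le {m : ℕ} {α : Fin m → ℝ} (hα : ∀ i, α i ≠ 0) :
    #(pmFiber α) ≤ 2 * m.choose (m / 2) := by
  rw [pmFiber, filter_or, two_mul]
  exact (card_union_le _ _).trans
    (add_le_add (card_signDot_eq_le hα 1) (card_signDot_eq_le hα (-1)))

lemma centralBinom_sq_mul_le (k : ℕ) : k.centralBinom ^ 2 * (3 * k + 1) ≤ 16 ^ k := by
  induction k with
  | zero => simp
  | succ k ih =>
    have hrec := Nat.succ_mul_centralBinom_succ k
    -- The factor `3k + 1` (rather than the true `πk`) is what lets the induction close.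
    have hpoly : 4 * (2 * k + 1) ^ 2 * (3 * k + 4) ≤ 16 * (k + 1) ^ 2 * (3 * k + 1) := by
      nlinarith
    refine Nat.le_of_mul_le_mul_left ?_ (by positivity : 0 < (k + 1) ^ 2)
    calc (k + 1) ^ 2 * ((k + 1).centralBinom ^ 2 * (3 * (k + 1) + 1))
        = 4 * (2 * k + 1) ^ 2 * (3 * k + 4) * k.centralBinom ^ 2 := by
          rw [← mul_assoc, ← mul_pow, hrec]; ring
      _ ≤ 16 * (k + 1) ^ 2 * (3 * k + 1) * k.centralBinom ^ 2 := by gcongr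
      _ = (k + 1) ^ 2 * (k.centralBinom ^ 2 * (3 * k + 1)) * 16 := by ring
      _ ≤ (k + 1) ^ 2 * 16 ^ k * 16 := by gcongr
      _ = (k + 1) ^ 2 * 16 ^ (k + 1) := by ring

lemma choose_half_sq_mul_le (m : ℕ) : m.choose (m / 2) ^ 2 * (m + 1) ≤ 4 ^ m := by
  rcases Nat.even_or_odd' m with ⟨k, rfl | rfl⟩
  · rw [Nat.mul_div_cancel_left k two_pos, ← Nat.centralBinom_eq_two_mul_choose, pow_mul]
    calc k.centralBinom ^ 2 * (2 * k + 1) ≤ k.centralBinom ^ 2 * (3 * k + 1) :=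
          Nat.mul_le_mul_left _ (by omega)
      _ ≤ (4 ^ 2) ^ k := centralBinom_sq_mul_le k
  · have hdiv : (2 * k + 1) / 2 = k := by omega
    have hpascal : (k + 1).centralBinom = 2 * (2 * k + 1).choose k := by
      rw [Nat.centralBinom_eq_two_mul_choose, show 2 * (k + 1) = 2 * k + 1 + 1 by ring,
        Nat.choose_succ_succ, Nat.choose_symm_half]
      ring
    rw [hdiv]
    refine Nat.le_of_mul_le_mul_left ?_ (by norm_num : 0 < 4)
    calc 4 * ((2 * k + 1).choose k ^ 2 * (2 * k + 1 + 1))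
        = (k + 1).centralBinom ^ 2 * (2 * k + 2) := by rw [hpascal]; ring
      _ ≤ (k + 1).centralBinom ^ 2 * (3 * (k + 1) + 1) := Nat.mul_le_mul_left _ (by omega)
      _ ≤ 16 ^ (k + 1) := centralBinom_sq_mul_le (k + 1)
      _ = 4 * 4 ^ (2 * k + 1) := by rw [show (16 : ℕ) = 4 ^ 2 by rfl, ← pow_mul]; ring

lemma card_filter_comp_orderEmbOfFin_le {β : Type*} [Fintype β] [DecidableEq β] {m n : ℕ}
    (T : Finset (Fin n)) (hT : #T = m) (A : Finset (Fin m → β)) (G : Finset β) :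
    #{V : Fin n → β | V ∘ T.orderEmbOfFin hT ∈ A ∧ ∀ t ∉ T, V t ∈ G} ≤ #A * #G ^ (n - m) := by
  have hcompl : #Tᶜ = n - m := by rw [card_compl, Fintype.card_fin, hT]
  calc _ ≤ #(A ×ˢ Fintype.piFinset fun _ : (Tᶜ : Finset (Fin n)) => G) := by
        refine card_le_card_of_injOn (fun V => (V ∘ T.orderEmbOfFin hT, fun t => V t)) ?_ ?_
        · intro V hV
          obtain ⟨-, hA, hG⟩ := mem_filter.1 (mem_coe.1 hV)
          simp only [coe_product, Set.mem_prod, mem_coe, Fintype.mem_piFinset]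
          exact ⟨hA, fun t => hG t (mem_compl.1 t.2)⟩
        · intro V₁ _ V₂ _ h
          simp only [Prod.mk.injEq] at h
          funext t
          by_cases ht : t ∈ T
          · obtain ⟨k, rfl⟩ : t ∈ Set.range (T.orderEmbOfFin hT) := by simpa using ht
            exact congrFun h.1 k
          · exact congrFun h.2 ⟨t, mem_compl.2 ht⟩
    _ = #A * #G ^ (n - m) := by simp [card_product, hcompl]

lemma exists_linearIndepOn_transpose {K ρ ι : Type*} [Field K] [Fintype ρ] [Fintype ι]
    {v : ρ → ι → K} (hv : LinearIndependent K v) :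
    ∃ T : Finset ι, #T = Fintype.card ρ ∧ LinearIndepOn K (fun t i => v i t) T := by
  classical
  set w : ι → ρ → K := fun t i => v i t
  obtain ⟨b, -, -, hspan, hli⟩ :=
    exists_linearIndepOn_extension (linearIndepOn_empty K w) (Set.empty_subset Set.univ)
  refine ⟨b.toFinset, ?_, by simpa using hli⟩
  have hspan_eq : Submodule.span K (w '' b) = Submodule.span K (Set.range w) :=
    le_antisymm (Submodule.span_mono (Set.image_subset_range _ _))
      (Submodule.span_le.2 (by rwa [Set.image_univ] at hspan))
  rw [← (show LinearIndependent K (Matrix.of v) from hv).rank_matrix,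
    Matrix.rank_eq_finrank_span_cols, Set.toFinset_card]
  rw [show (Matrix.of v).col = w from rfl, ← hspan_eq, Set.image_eq_range,
    finrank_span_eq_card hli]

def signMat {m : ℕ} (C : Fin m → Fin m → Bool) : Matrix (Fin m) (Fin m) ℝ :=
  Matrix.of fun k => signVec (C k)

lemma signMat_mulVec {m : ℕ} (C : Fin m → Fin m → Bool) (α : Fin m → ℝ) :
    signMat C *ᵥ α = fun k => signDot α (C k) := rfl

/-- The `α` with `signDot α (C k) = ±1`, the sign given by `x k`; junk unless `signMat C` is
invertible. -/
def pmCoeffs {m : ℕ} (x : Fin m → Bool) (C : Fin m → Fin m → Bool) : Fin m → ℝ :=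
  (signMat C)⁻¹ *ᵥ signVec x

lemma pmCoeffs_eq {m : ℕ} {C : Fin m → Fin m → Bool} {α : Fin m → ℝ}
    (hC : LinearIndependent ℝ fun k => signVec (C k)) (hα : ∀ k, C k ∈ pmFiber α) :
    pmCoeffs (fun k => decide (signDot α (C k) = 1)) C = α := by
  have hunit : IsUnit (signMat C) := Matrix.linearIndependent_rows_iff_isUnit.1 hC
  have hmul : signVec (fun k => decide (signDot α (C k) = 1)) = signMat C *ᵥ α := by
    rw [signMat_mulVec]
    funext k
    rcases (mem_filter.1 (hα k)).2 with h | h <;> norm_num [signVec, h]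
  rw [pmCoeffs, hmul, Matrix.mulVec_mulVec,
    Matrix.nonsing_inv_mul _ ((Matrix.isUnit_iff_isUnit_det _).1 hunit), Matrix.one_mulVec]

/-- Here an `m × n` sign matrix is stored by columns: `V t` is column `t`. -/
def pmCols (m : ℕ) {n : ℕ} (T : Finset (Fin n)) : Finset (Fin n → Fin m → Bool) :=
  {V | (∃ α, (∀ i, α i ≠ 0) ∧ ∀ t, V t ∈ pmFiber α) ∧
    LinearIndepOn ℝ (fun t => signVec (V t)) T}

lemma card_pmCols_le {m n : ℕ} (T : Finset (Fin n)) (hT : #T = m) :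
    #(pmCols m T) ≤ 2 ^ m * (2 ^ m) ^ m * (2 * m.choose (m / 2)) ^ (n - m) := by
  set e := T.orderEmbOfFin hT
  set I := (univ : Finset ((Fin m → Bool) × (Fin m → Fin m → Bool))).filter
    fun xC => ∀ i, pmCoeffs xC.1 xC.2 i ≠ 0
  have hcover : pmCols m T ⊆ I.biUnion fun xC =>
      {V | V ∘ e ∈ ({xC.2} : Finset _) ∧ ∀ t ∉ T, V t ∈ pmFiber (pmCoeffs xC.1 xC.2)} := by
    intro V hV
    obtain ⟨⟨α, hα0, hα⟩, hli⟩ := (mem_filter.1 hV).2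
    have hliC : LinearIndependent ℝ ((fun t => signVec (V t)) ∘ e) := by
      rw [← linearIndepOn_range_iff e.injective, Finset.range_orderEmbOfFin]
      exact hli
    have hcoeffs := pmCoeffs_eq (C := V ∘ e) hliC fun k => hα (e k)
    refine mem_biUnion.2 ⟨(fun k => decide (signDot α ((V ∘ e) k) = 1), V ∘ e), ?_, ?_⟩
    · exact mem_filter.2 ⟨mem_univ _, fun i => by simpa only [hcoeffs] using hα0 i⟩
    · refine mem_filter.2 ⟨mem_univ _, mem_singleton_self _, fun t _ => ?_⟩
      simpa only [hcoeffs] using hα t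
  refine (card_le_card hcover).trans ((card_biUnion_le_card_mul _ _
    ((2 * m.choose (m / 2)) ^ (n - m)) fun xC hxC => ?_).trans ?_)
  · refine (card_filter_comp_orderEmbOfFin_le T hT _ _).trans ?_
    rw [card_singleton, one_mul]
    exact Nat.pow_le_pow_left (card_pmFiber_le (mem_filter.1 hxC).2) _
  · gcongr
    exact (card_filter_le _ _).trans (by simp)

lemma signDot_column_eq_sum_apply {m n : ℕ} (β : Fin m → ℝ) (U : Fin m → Fin n → Bool) (t : Fin n) :
    signDot β (fun i => U i t) = (∑ i, β i • signVec (U i)) t := by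
  simp only [signDot, dotProduct, Finset.sum_apply, Pi.smul_apply, smul_eq_mul, mul_comm]
  rfl

lemma exists_pmFiber_of_pmEvent_self {m n : ℕ} {U : Fin m → Fin n → Bool} (hU : PmEvent m U) :
    ∃ β : Fin m → ℝ, (∀ i, β i ≠ 0) ∧ ∀ t, (fun i => U i t) ∈ pmFiber β := by
  obtain ⟨j, hj, α, hα, hpm⟩ := hU
  set σ := Equiv.ofBijective j (Finite.injective_iff_bijective.1 hj)
  refine ⟨α ∘ σ.symm, fun i => hα _, fun t => mem_filter.2 ⟨mem_univ _, ?_⟩⟩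
  rw [signDot_column_eq_sum_apply, ← σ.sum_comp]
  simpa [σ] using hpm t

lemma card_MmSet_self_le (m n : ℕ) :
    #(MmSet m m n) ≤ n.choose m * (2 ^ m * (2 ^ m) ^ m * (2 * m.choose (m / 2)) ^ (n - m)) := by
  have hmaps : ∀ U ∈ MmSet m m n, (fun t i => U i t) ∈ (powersetCard m univ).biUnion
      (pmCols m) := by
    intro U hU
    obtain ⟨hli, hpm⟩ := (mem_filter.1 hU).2
    obtain ⟨T, hT, hliT⟩ := exists_linearIndepOn_transpose hli
    rw [Fintype.card_fin] at hT
    exact mem_biUnion.2 ⟨T, mem_powersetCard_univ.2 hT,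
      mem_filter.2 ⟨mem_univ _, exists_pmFiber_of_pmEvent_self hpm, hliT⟩⟩
  refine (card_le_card_of_injOn _ hmaps fun U₁ _ U₂ _ h =>
    funext fun i => funext fun t => congrFun (congrFun h t) i).trans ?_
  refine (card_biUnion_le_card_mul _ _ _ fun T hT =>
    card_pmCols_le T (mem_powersetCard_univ.1 hT)).trans ?_
  simp

lemma comp_mem_MmSet_self {m p n : ℕ} {W : Fin p → Fin n → Bool}
    (hli : LinearIndependent ℝ fun i => signVec (W i)) {j e : Fin m → Fin p}
    (hj : Function.Injective j) (he : Function.Injective e) (hje : ∀ i, ∃ k, e k = j i)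
    {α : Fin m → ℝ} (hα : ∀ i, α i ≠ 0) (hpm : IsPM (∑ i, α i • signVec (W (j i)))) :
    W ∘ e ∈ MmSet m m n := by
  choose σ hσ using hje
  refine mem_filter.2 ⟨mem_univ _, hli.comp e he, σ, fun i₁ i₂ h => hj ?_, α, hα, ?_⟩
  · rw [← hσ i₁, ← hσ i₂, h]
  · simpa [hσ] using hpm

lemma card_MmSet_le (m p n : ℕ) :
    #(MmSet m p n) ≤ p.choose m * (#(MmSet m m n) * (2 ^ n) ^ (p - m)) := by
  have hcover : MmSet m p n ⊆ (powersetCard m univ).attach.biUnion fun S =>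
      {W | W ∘ S.1.orderEmbOfFin (mem_powersetCard_univ.1 S.2) ∈ MmSet m m n ∧
        ∀ t ∉ S.1, W t ∈ univ} := by
    intro W hW
    obtain ⟨hli, j, hj, α, hα, hpm⟩ := (mem_filter.1 hW).2
    have hS : univ.image j ∈ powersetCard m univ := by
      simp [card_image_of_injective _ hj]
    refine mem_biUnion.2 ⟨⟨_, hS⟩, mem_attach _ _, mem_filter.2 ⟨mem_univ _, ?_, by simp⟩⟩
    refine comp_mem_MmSet_self hli hj (orderEmbOfFin _ _).injective (fun i => ?_) hα hpm
    exact (by simp :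
      j i ∈ Set.range ((univ.image j).orderEmbOfFin (mem_powersetCard_univ.1 hS)))
  refine (card_le_card hcover).trans ((card_biUnion_le_card_mul _ _ _ fun S _ =>
    card_filter_comp_orderEmbOfFin_le _ _ _ _).trans ?_)
  simp

lemma two_mul_choose_half_sq_mul_le (m : ℕ) :
    (2 * m.choose (m / 2)) ^ 2 * (m + 1) ≤ 4 ^ (m + 1) := by
  calc (2 * m.choose (m / 2)) ^ 2 * (m + 1) = 4 * (m.choose (m / 2) ^ 2 * (m + 1)) := by ring
    _ ≤ 4 * 4 ^ m := Nat.mul_le_mul_left _ (choose_half_sq_mul_le m)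
    _ = 4 ^ (m + 1) := by ring

lemma card_MmSet_sq_mul_le {m p n : ℕ} (hmp : m ≤ p) (hpn : p ≤ n) :
    #(MmSet m p n) ^ 2 * (m + 1) ^ (n - m) ≤ (2 ^ (3 * n + p * n)) ^ 2 := by
  set D := 2 * m.choose (m / 2)
  set Y := 2 ^ n * (2 ^ n * 2 ^ m * (2 ^ m) ^ m * (2 ^ n) ^ (p - m))
  have hcard : #(MmSet m p n) ≤ Y * D ^ (n - m) := by
    refine (card_MmSet_le m p n).trans ?_
    have hp : p.choose m ≤ 2 ^ n :=
      (Nat.choose_le_two_pow p m).trans (Nat.pow_le_pow_right two_pos hpn)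
    have hn : n.choose m ≤ 2 ^ n := Nat.choose_le_two_pow n m
    calc p.choose m * (#(MmSet m m n) * (2 ^ n) ^ (p - m))
        ≤ 2 ^ n * ((2 ^ n * (2 ^ m * (2 ^ m) ^ m * D ^ (n - m))) * (2 ^ n) ^ (p - m)) := by
          gcongr
          exact (card_MmSet_self_le m n).trans (by gcongr)
      _ = Y * D ^ (n - m) := by ring
  have hexp : Y * 2 ^ ((m + 1) * (n - m)) = 2 ^ (3 * n + p * n) := by
    obtain ⟨q, rfl⟩ := Nat.exists_eq_add_of_le (hmp.trans hpn)
    obtain ⟨r, rfl⟩ := Nat.exists_eq_add_of_le hmp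
    simp only [Y, Nat.add_sub_cancel_left, ← pow_mul, ← pow_add]
    ring_nf
  calc #(MmSet m p n) ^ 2 * (m + 1) ^ (n - m)
      ≤ (Y * D ^ (n - m)) ^ 2 * (m + 1) ^ (n - m) := by gcongr
    _ = Y ^ 2 * (D ^ 2 * (m + 1)) ^ (n - m) := by
        rw [mul_pow, ← pow_mul, mul_comm (n - m) 2, pow_mul, mul_assoc, ← mul_pow]
    _ ≤ Y ^ 2 * (4 ^ (m + 1)) ^ (n - m) := by gcongr; exact two_mul_choose_half_sq_mul_le m
    _ = (2 ^ (3 * n + p * n)) ^ 2 := by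
        rw [← hexp, show (4 : ℕ) = 2 ^ 2 by rfl, ← pow_mul, ← pow_mul]
        ring

lemma Rm_sq_mul_le {m p n : ℕ} (hmp : m ≤ p) (hpn : p ≤ n) :
    Rm m p n ^ 2 * ((m : ℝ) + 1) ^ (n - m) ≤ 64 ^ n := by
  have h := card_MmSet_sq_mul_le hmp hpn
  have hR : ((#(MmSet m p n) ^ 2 * (m + 1) ^ (n - m) : ℕ) : ℝ)
      ≤ ((2 ^ (3 * n + p * n)) ^ 2 : ℕ) := by exact_mod_cast h
  push_cast at hR
  rw [Rm, div_pow, div_mul_eq_mul_div, div_le_iff₀ (by positivity)]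
  calc _ ≤ ((2 : ℝ) ^ (3 * n + p * n)) ^ 2 := hR
    _ = 64 ^ n * (2 ^ (p * n)) ^ 2 := by
        rw [show (64 : ℝ) = 2 ^ 6 by norm_num, ← pow_mul, ← pow_mul, ← pow_mul, ← pow_add]
        ring_nf

lemma logb_two_five_gt : 2.32 < logb 2 5 := by
  have h : logb 2 ((2 : ℝ) ^ 58) < logb 2 ((5 : ℝ) ^ 25) :=
    logb_lt_logb one_lt_two (by positivity) (by norm_num)
  rw [logb_pow, logb_pow, logb_self_eq_one one_lt_two] at h
  norm_num at h ⊢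
  linarith

lemma logb_sixtyFour_pow (n : ℕ) : logb 2 ((64 : ℝ) ^ n) = 6 * n := by
  rw [show (64 : ℝ) = 2 ^ 6 by norm_num, ← pow_mul, logb_pow, logb_self_eq_one one_lt_two]
  push_cast; ring

lemma logb_sq_five_eighths_pow_mul_pow {δ : ℝ} (hδ : 0 < δ) (n : ℕ) {x : ℝ} (hx : 0 < x)
    (k : ℕ) : logb 2 ((δ * (5 / 8) ^ n) ^ 2 * x ^ k)
      = 2 * logb 2 δ + 2 * n * (logb 2 5 - 3) + k * logb 2 x := by
  rw [logb_mul (by positivity) (by positivity), logb_pow, logb_mul hδ.ne' (by positivity),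
    logb_pow, logb_pow, logb_div (by norm_num) (by norm_num),
    show (8 : ℝ) = 2 ^ 3 by norm_num, logb_pow, logb_self_eq_one one_lt_two]
  push_cast; ring

lemma logb_add_two_mul_logb_le {ε : ℝ} (hε : 0 < ε) {n m : ℕ} (hn : 0 < n)
    (hm : ε ^ 2 * n < m) : logb 2 n + 2 * logb 2 ε ≤ logb 2 ((m : ℝ) + 1) := by
  calc logb 2 n + 2 * logb 2 ε = logb 2 (ε ^ 2 * n) := by
        rw [logb_mul (by positivity) (by positivity), logb_pow]; push_cast; ring
    _ ≤ logb 2 ((m : ℝ) + 1) := logb_le_logb_of_le one_lt_two (by positivity) (by linarith)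

lemma sub_mul_le_mul_logb {ε c γ : ℝ} (hε : 0 < ε) (hc : 0 ≤ c) {n m : ℕ} (hn : 2 ≤ n)
    (hK : -2 * c * logb 2 ε ≤ logb 2 n * γ) (hm₁ : ε ^ 2 * n < m)
    (hm₂ : (m : ℝ) ≤ n - c * n / logb 2 n) :
    (c - γ) * n ≤ ((n - m : ℕ) : ℝ) * logb 2 ((m : ℝ) + 1) := by
  set ℓ := logb 2 n
  have hℓ : 0 < ℓ := logb_pos one_lt_two (by exact_mod_cast hn)
  have hcnℓ : 0 ≤ c * n / ℓ := div_nonneg (mul_nonneg hc n.cast_nonneg) hℓ.le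
  have hmn : m ≤ n := by exact_mod_cast (show (m : ℝ) ≤ n by linarith)
  have hgap : c * n / ℓ ≤ ((n - m : ℕ) : ℝ) := by rw [Nat.cast_sub hmn]; linarith
  have hlogm : 0 ≤ logb 2 ((m : ℝ) + 1) :=
    logb_nonneg one_lt_two (by linarith [m.cast_nonneg (α := ℝ)])
  have hsmall : n * (-2 * c * logb 2 ε) / ℓ ≤ γ * n := by
    rw [div_le_iff₀ hℓ]
    linarith [mul_le_mul_of_nonneg_left hK (Nat.cast_nonneg (α := ℝ) n)]
  calc (c - γ) * n ≤ c * n + c * n / ℓ * (2 * logb 2 ε) := by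
        rw [show c * n / ℓ * (2 * logb 2 ε) = -(n * (-2 * c * logb 2 ε) / ℓ) by ring]
        linarith
    _ = c * n / ℓ * (ℓ + 2 * logb 2 ε) := by rw [mul_add, div_mul_cancel₀ _ hℓ.ne']
    _ ≤ c * n / ℓ * logb 2 ((m : ℝ) + 1) :=
        mul_le_mul_of_nonneg_left (logb_add_two_mul_logb_le hε (by omega) hm₁) hcnℓ
    _ ≤ ((n - m : ℕ) : ℝ) * logb 2 ((m : ℝ) + 1) := mul_le_mul_of_nonneg_right hgap hlogm

lemma eventually_sixtyFour_pow_le {ε c δ : ℝ} (hε : 0 < ε) (hc : 7.36 ≤ c) (hδ : 0 < δ) :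
    ∀ᶠ n : ℕ in atTop, ∀ m : ℕ, ε ^ 2 * n < m → (m : ℝ) ≤ n - c * n / logb 2 n →
      (64 : ℝ) ^ n ≤ (δ * (5 / 8) ^ n) ^ 2 * ((m : ℝ) + 1) ^ (n - m) := by
  -- `γ` is the slack in `7.36 > 2 log₂ (64 / 5) = 12 - 2 log₂ 5`.
  set γ := logb 2 5 - 2.32 with hγ_def
  have hγ : 0 < γ := sub_pos.2 logb_two_five_gt
  have hlog : Tendsto (fun n : ℕ => logb 2 n) atTop atTop :=
    (tendsto_logb_atTop one_lt_two).comp tendsto_natCast_atTop_atTop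
  filter_upwards [hlog.eventually_ge_atTop (-2 * c * logb 2 ε / γ),
    tendsto_natCast_atTop_atTop.eventually_ge_atTop (-2 * logb 2 δ / γ),
    eventually_ge_atTop 2] with n hK hδn hn m hm₁ hm₂
  rw [div_le_iff₀ hγ] at hK hδn
  have hmain := sub_mul_le_mul_logb hε (by linarith) hn hK hm₁ hm₂
  rw [← logb_le_logb one_lt_two (by positivity) (by positivity), logb_sixtyFour_pow,
    logb_sq_five_eighths_pow_mul_pow hδ n (by positivity)]
  nlinarith [mul_le_mul_of_nonneg_right hc (Nat.cast_nonneg (α := ℝ) n)]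

theorem stmt9_general (ε c : ℝ) (hε0 : 0 < ε) (hc : 7.36 ≤ c) :
    ∀ δ : ℝ, 0 < δ → ∃ N : ℕ, ∀ n ≥ N, ∀ m p : ℕ,
      ε ^ 2 * n < (m : ℝ) → (m : ℝ) ≤ (n : ℝ) - c * n / Real.logb 2 n →
      m ≤ p → p + 1 ≤ n →
      Rm m p n ≤ δ * (5 / 8) ^ n := by
  intro δ hδ
  obtain ⟨N, hN⟩ := eventually_atTop.1 (eventually_sixtyFour_pow_le hε0 hc hδ)
  refine ⟨N, fun n hn m p hm₁ hm₂ hmp hpn => ?_⟩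
  have hsq : Rm m p n ^ 2 ≤ (δ * (5 / 8) ^ n) ^ 2 :=
    le_of_mul_le_mul_right ((Rm_sq_mul_le hmp (by omega)).trans (hN n hn m hm₁ hm₂))
      (by positivity)
  exact (pow_le_pow_iff_left₀ (by unfold Rm; positivity) (by positivity) two_ne_zero).1 hsq

/-- fix `0 < ε < 1/100` and `c ≥ 7.36`. For every `δ > 0` there is `N` such
that for all `n ≥ N`, `ε² n < m ≤ n - c n / log₂ n` and `m ≤ p ≤ n - 1`,
`R_m(p,n) ≤ δ (5/8)^n`. -/
theorem stmt9 (ε c : ℝ) (hε0 : 0 < ε) (hε : ε < 1 / 100) (hc : 7.36 ≤ c) :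
    ∀ δ : ℝ, 0 < δ → ∃ N : ℕ, ∀ n ≥ N, ∀ m p : ℕ,
      ε ^ 2 * n < (m : ℝ) → (m : ℝ) ≤ (n : ℝ) - c * n / Real.logb 2 n →
      m ≤ p → p + 1 ≤ n →
      Rm m p n ≤ δ * (5 / 8) ^ n :=
  stmt9_general ε c hε0 hc
end
end

section
/- For all integers m, p, n with 3 ≤ m ≤ p ≤ n − 1, one has P_m(p,n) ≤ R_m(p,n) + P_{p,n} ≤ C(p,m)·R_m(m,n) + P_{p,n}. -/
open scoped Classical

noncomputable section

/-! If `m` of the rows of a `{±1}`-matrix have a `{±1}`-valued combination with nonzero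
coefficients, then either its rows are dependent or it lies in `𝓜_m(p, n)`; this is the first
inequality. A matrix in `𝓜_m(p, n)` has an `m`-set `S` of rows that on their own form a matrix in
`𝓜_m(m, n)`. The `S`-rows of a uniformly random matrix are uniformly random, so a union bound over
the `C(p, m)` choices of `S` gives the second. -/

open Finset

theorem card_filter_comp_mem_mul {ι κ X : Type*} [Fintype ι] [Fintype κ] [Fintype X]
    (e : ι ↪ κ) (A : Finset (ι → X)) :
    #{f : κ → X | f ∘ e ∈ A} * Fintype.card X ^ Fintype.card ι =
      #A * Fintype.card X ^ Fintype.card κ := by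
  set s := Set.range e
  let Φ : (κ → X) ≃ (ι → X) × (↥sᶜ → X) :=
    (Equiv.piEquivPiSubtypeProd (· ∈ s) fun _ => X).trans
      (Equiv.prodCongr ((Equiv.ofInjective e e.injective).arrowCongr (Equiv.refl X)).symm
        (Equiv.refl _))
  have hΦ : #{f : κ → X | f ∘ e ∈ A} = #(A ×ˢ (univ : Finset (↥sᶜ → X))) :=
    card_equiv Φ fun f => by
      simp only [mem_filter, mem_univ, true_and, Equiv.arrowCongr_symm, Equiv.refl_symm,
        Equiv.trans_apply, Equiv.piEquivPiSubtypeProd_apply, Equiv.prodCongr_apply,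
        Equiv.coe_refl, Prod.map_apply, id_eq, mem_product, and_true, Φ]
      rfl
  have hκ : Fintype.card κ = Fintype.card ι + Fintype.card ↥sᶜ := by
    rw [Fintype.card_compl_set, Set.card_range_of_injective e.injective]
    have := Fintype.card_le_of_embedding e
    omega
  rw [hΦ, card_product, card_univ, Fintype.card_fun, hκ, pow_add]
  ring

theorem card_filter_comp_mem_div {ι κ X : Type*} [Fintype ι] [Fintype κ] [Fintype X]
    [Nonempty X] (e : ι ↪ κ) (A : Finset (ι → X)) :
    (#{f : κ → X | f ∘ e ∈ A} : ℝ) / Fintype.card X ^ Fintype.card κ =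
      #A / Fintype.card X ^ Fintype.card ι := by
  rw [div_eq_div_iff (by positivity) (by positivity)]
  exact_mod_cast card_filter_comp_mem_mul e A

theorem PmEvent.exists_comp_orderEmbOfFin {m p n : ℕ} {W : Fin p → Fin n → Bool}
    (h : PmEvent m W) :
    ∃ S : Finset (Fin p), ∃ hS : #S = m, PmEvent m (W ∘ S.orderEmbOfFin hS) := by
  obtain ⟨j, hj, α, hα, hPM⟩ := h
  have hS : #(univ.image j) = m := by rw [card_image_of_injective _ hj, card_fin]
  set e := (univ.image j).orderEmbOfFin hS
  let k : Fin m → Fin m := fun i =>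
    ((univ.image j).orderIsoOfFin hS).symm ⟨j i, mem_image_of_mem j (mem_univ i)⟩
  have hek : ∀ i, e (k i) = j i := fun i => by
    rw [← coe_orderIsoOfFin_apply, OrderIso.apply_symm_apply]
  refine ⟨_, hS, k, ?_, α, hα, by simpa only [Function.comp_apply, e, hek] using hPM⟩
  exact Function.Injective.of_comp (f := e) (by simpa only [Function.comp_def, hek] using hj)

def mmSetOn (m n : ℕ) {p : ℕ} (S : Finset (Fin p)) : Finset (Fin p → Fin n → Bool) :=
  {W | ∃ hS : #S = m, W ∘ S.orderEmbOfFin hS ∈ MmSet m m n}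

theorem mmSet_subset_biUnion_mmSetOn (m p n : ℕ) :
    MmSet m p n ⊆ (univ.powersetCard m).biUnion (mmSetOn m n) := by
  intro W hW
  obtain ⟨hli, hPm⟩ := (mem_filter.mp hW).2
  obtain ⟨S, hS, hPmS⟩ := hPm.exists_comp_orderEmbOfFin
  refine mem_biUnion.mpr ⟨S, mem_powersetCard_univ.mpr hS, mem_filter.mpr ⟨mem_univ _, hS, ?_⟩⟩
  exact mem_filter.mpr ⟨mem_univ _, hli.comp _ (S.orderEmbOfFin hS).injective, hPmS⟩

theorem card_mmSetOn_div {m n p : ℕ} {S : Finset (Fin p)} (hS : #S = m) :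
    (#(mmSetOn m n S) : ℝ) / 2 ^ (p * n) = Rm m m n := by
  have := card_filter_comp_mem_div (X := Fin n → Bool) (S.orderEmbOfFin hS).toEmbedding
    (MmSet m m n)
  simp only [Fintype.card_fun, Fintype.card_bool, Fintype.card_fin, Nat.cast_pow, Nat.cast_ofNat,
    ← pow_mul, mul_comm n] at this
  rw [Rm, ← this, mmSetOn]
  congr 3
  ext W
  simp only [mem_filter, mem_univ, true_and, hS, exists_true_left]
  rfl

theorem rm_le_choose_mul_rm (m p n : ℕ) : Rm m p n ≤ p.choose m * Rm m m n :=
  calc Rm m p n ≤ ∑ S ∈ univ.powersetCard m, (#(mmSetOn m n S) : ℝ) / 2 ^ (p * n) := by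
        rw [Rm, ← sum_div]
        gcongr
        exact_mod_cast (card_le_card (mmSet_subset_biUnion_mmSetOn m p n)).trans card_biUnion_le
    _ = p.choose m * Rm m m n := by
        rw [sum_congr rfl fun S hS => card_mmSetOn_div (mem_powersetCard_univ.mp hS), sum_const,
          card_powersetCard, card_univ, Fintype.card_fin, nsmul_eq_mul]

theorem probPm_le_rm_add_probSingular (m p n : ℕ) :
    probPm m p n ≤ Rm m p n + probSingular p n := by
  rw [probPm, Rm, probSingular, ← add_div]
  gcongr
  norm_cast
  refine (card_le_card fun W hW => ?_).trans (card_union_le _ _)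
  by_cases hli : LinearIndependent ℝ fun i => signVec (W i)
  · exact mem_union_left _ (mem_filter.mpr ⟨mem_univ _, hli, (mem_filter.mp hW).2⟩)
  · exact mem_union_right _ (mem_filter.mpr ⟨mem_univ _, hli⟩)

theorem stmt13_general (m p n : ℕ) :
    probPm m p n ≤ Rm m p n + probSingular p n ∧
    Rm m p n + probSingular p n ≤ (p.choose m : ℝ) * Rm m m n + probSingular p n :=
  ⟨probPm_le_rm_add_probSingular m p n, add_le_add_left (rm_le_choose_mul_rm m p n) _⟩

/-- for `3 ≤ m ≤ p ≤ n - 1`,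
`ℙ_m(p,n) ≤ R_m(p,n) + ℙ_{p,n} ≤ C(p,m) R_m(m,n) + ℙ_{p,n}`. -/
theorem stmt13 (m p n : ℕ) (h1 : 3 ≤ m) (h2 : m ≤ p) (h3 : p + 1 ≤ n) :
    probPm m p n ≤ Rm m p n + probSingular p n ∧
    Rm m p n + probSingular p n ≤ (p.choose m : ℝ) * Rm m m n + probSingular p n :=
  stmt13_general m p n
end
end

section
/- For all integers p, n with 1 ≤ p ≤ n − 1, every ordered p-tuple (w_1, …, w_p) of {±1}-vectors in R^n whose real linear span contains a {±1}-vector different from ±w_1, …, ±w_p either has linearly dependent vectors w_1, …, w_p (i.e., the corresponding p×n matrix has rank less than p), or the corresponding p×n matrix belongs to M_m(p,n) for some m with 3 ≤ m ≤ p. -/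
open scoped Classical

noncomputable section

/-!
Write the given vector as `x = ∑ cᵢ wᵢ`. A `{±1}`-vector is not `0`; it is `c • w` for a
`{±1}`-vector `w` only when `c = ±1`; and it is `a • u + b • v` with `a b ≠ 0` only when
`u = ±v`, which linear independence forbids. Hence the support of `c` has at least three
elements, and `c` restricted to its support exhibits `W` in `𝓜_m(p, n)`.
-/

open Finset

namespace IsPM

variable {n : ℕ} {u v : Fin n → ℝ}

theorem sq_eq_one (hv : IsPM v) (i : Fin n) : v i ^ 2 = 1 := by
  rcases hv i with h | h <;> simp [h]

theorem apply_eq_or_eq_neg (hu : IsPM u) (hv : IsPM v) (i : Fin n) : u i = v i ∨ u i = -v i :=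
  sq_eq_sq_iff_eq_or_eq_neg.mp (by rw [hu.sq_eq_one, hv.sq_eq_one])

theorem ne_zero [NeZero n] (hv : IsPM v) : v ≠ 0 := fun h => by
  simpa [h] using hv.sq_eq_one 0

theorem eq_one_or_eq_neg_one_of_smul [NeZero n] {c : ℝ} (hv : IsPM v) (hcv : IsPM (c • v)) :
    c = 1 ∨ c = -1 := by
  rw [← sq_eq_one_iff]
  simpa [mul_pow, hv.sq_eq_one] using hcv.sq_eq_one 0

/-- A coordinate where `u = v` forces `(a + b)² = 1` and one where `u = -v` forces
`(a - b)² = 1`; together they give `a b = 0`. -/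
theorem eq_or_eq_neg_of_add_smul {a b : ℝ} (hu : IsPM u) (hv : IsPM v)
    (hx : IsPM (a • u + b • v)) (ha : a ≠ 0) (hb : b ≠ 0) : u = v ∨ u = -v := by
  by_contra! h
  obtain ⟨j, hj⟩ := Function.ne_iff.mp h.1
  obtain ⟨k, hk⟩ := Function.ne_iff.mp h.2
  have hvj : v j = -u j := by linarith [(hu.apply_eq_or_eq_neg hv j).resolve_left hj]
  have hvk : v k = u k := ((hu.apply_eq_or_eq_neg hv k).resolve_right hk).symm
  have hsub : (a - b) ^ 2 = 1 := by
    simpa [hvj, mul_pow, ← sub_eq_add_neg, ← sub_mul, hu.sq_eq_one] using hx.sq_eq_one j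
  have hadd : (a + b) ^ 2 = 1 := by
    simpa [hvk, mul_pow, ← add_mul, hu.sq_eq_one] using hx.sq_eq_one k
  exact mul_ne_zero ha hb (by linear_combination (hadd - hsub) / 4)

end IsPM

theorem isPM_signVec {n : ℕ} (u : Fin n → Bool) : IsPM (signVec u) := fun i => by
  unfold signVec
  cases u i <;> simp

theorem LinearIndependent.ne_neg {ι R M : Type*} [Ring R] [Nontrivial R] [AddCommGroup M]
    [Module R M] {w : ι → M} (hw : LinearIndependent R w) {i j : ι} (hij : i ≠ j) :
    w i ≠ -w j := fun h =>
  one_ne_zero ((LinearIndepOn.pair_iff w hij).mp (hw.linearIndepOn _) 1 1 (by simp [h])).1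

theorem sum_filter_ne_zero_smul {ι R M : Type*} [Semiring R] [AddCommMonoid M] [Module R M]
    [Fintype ι] (c : ι → R) (w : ι → M) : ∑ i with c i ≠ 0, c i • w i = ∑ i, c i • w i :=
  sum_filter_of_ne fun i _ h hc => h (by simp [hc])

theorem three_le_card_support {ι : Type*} [Fintype ι] {n : ℕ} [NeZero n] {w : ι → Fin n → ℝ}
    {c : ι → ℝ} (hw : ∀ i, IsPM (w i)) (hLI : LinearIndependent ℝ w)
    (hx : IsPM (∑ i, c i • w i)) (hne : ∀ j, ∑ i, c i • w i ≠ w j ∧ ∑ i, c i • w i ≠ -w j) :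
    3 ≤ #{i | c i ≠ 0} := by
  rw [← sum_filter_ne_zero_smul] at hx hne
  by_contra! hcard
  interval_cases hS : #{i | c i ≠ 0}
  · rw [card_eq_zero.mp hS, sum_empty] at hx
    exact hx.ne_zero rfl
  · obtain ⟨a, ha⟩ := card_eq_one.mp hS
    rw [ha, sum_singleton] at hx hne
    rcases (hw a).eq_one_or_eq_neg_one_of_smul hx with h | h
    · exact (hne a).1 (by simp [h])
    · exact (hne a).2 (by simp [h])
  · obtain ⟨a, b, hab, hS⟩ := card_eq_two.mp hS
    have hmem : ∀ i ∈ ({a, b} : Finset ι), c i ≠ 0 := fun i hi => by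
      simpa using hS.ge hi
    rw [hS, sum_pair hab] at hx
    rcases (hw a).eq_or_eq_neg_of_add_smul (hw b) hx (hmem a (by simp)) (hmem b (by simp))
      with h | h
    · exact hab (hLI.injective h)
    · exact hLI.ne_neg hab h

theorem pmEvent_card_support {p n : ℕ} {W : Fin p → Fin n → Bool} {c : Fin p → ℝ}
    (hx : IsPM (∑ i, c i • signVec (W i))) : PmEvent #{i | c i ≠ 0} W := by
  set e := (({i | c i ≠ 0} : Finset (Fin p)).equivFin).symm
  refine ⟨fun k => e k, Subtype.val_injective.comp e.injective, fun k => c (e k),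
    fun k => (mem_filter.mp (e k).2).2, ?_⟩
  rwa [e.sum_comp (fun i => c i • signVec (W i)), sum_coe_sort _ (fun i => c i • signVec (W i)),
    sum_filter_ne_zero_smul]

theorem stmt15_general (p n : ℕ) (h2 : p + 1 ≤ n)
    (W : Fin p → Fin n → Bool) (hW : KSOEvent W) :
    (¬ LinearIndependent ℝ fun i => signVec (W i)) ∨
      ∃ m : ℕ, 3 ≤ m ∧ m ≤ p ∧ W ∈ MmSet m p n := by
  by_cases hLI : LinearIndependent ℝ fun i => signVec (W i)
  · obtain ⟨x, hx_mem, hx, hne⟩ := hW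
    obtain ⟨c, rfl⟩ := (Submodule.mem_span_range_iff_exists_fun ℝ).mp hx_mem
    have : NeZero n := ⟨by omega⟩
    exact .inr ⟨_, three_le_card_support (fun i => isPM_signVec (W i)) hLI hx hne,
      (card_filter_le _ _).trans_eq (card_fin p),
      mem_filter.mpr ⟨mem_univ _, hLI, pmEvent_card_support hx⟩⟩
  · exact .inl hLI

/-- for `1 ≤ p ≤ n - 1`, every ordered `p`-tuple of `{±1}`-vectors whose
real span contains a `{±1}`-vector different from `±w_1, …, ±w_p` either has linearly
dependent rows or belongs to `𝓜_m(p,n)` for some `3 ≤ m ≤ p`. -/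
theorem stmt15 (p n : ℕ) (h1 : 1 ≤ p) (h2 : p + 1 ≤ n)
    (W : Fin p → Fin n → Bool) (hW : KSOEvent W) :
    (¬ LinearIndependent ℝ fun i => signVec (W i)) ∨
      ∃ m : ℕ, 3 ≤ m ∧ m ≤ p ∧ W ∈ MmSet m p n :=
  stmt15_general p n h2 W hW
end
end

section
/- For all integers m, n with 1 ≤ m and m + 1 ≤ n, every matrix M ∈ M_m(m,n) has m+1 columns 1 ≤ j_1 < ⋯ < j_{m+1} ≤ n such that the m×(m+1) submatrix of M formed by the columns j_1, …, j_{m+1} belongs to M_m(m, m+1). -/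
open scoped Classical

noncomputable section

lemma exists_finset_sep {n : ℕ} (k : ℕ) (W : Submodule ℝ (Fin n → ℝ))
    (hk : Module.finrank ℝ W ≤ k) :
    ∃ S : Finset (Fin n), S.card ≤ k ∧
      ∀ x ∈ W, (∀ j ∈ S, x j = 0) → x = 0 := by
  induction k generalizing W with
  | zero =>
    refine ⟨∅, le_rfl, fun x hx _ => ?_⟩
    have hW : W = ⊥ := Submodule.finrank_eq_zero.mp (Nat.le_zero.mp hk)
    simpa [hW] using hx
  | succ k ih =>
    by_cases hW : W = ⊥
    · exact ⟨∅, by simp, fun x hx _ => by simpa [hW] using hx⟩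
    · obtain ⟨x, hxW, hx0⟩ := Submodule.exists_mem_ne_zero_of_ne_bot hW
      obtain ⟨j, hj⟩ : ∃ j, x j ≠ 0 := by
        by_contra h
        push_neg at h
        exact hx0 (funext h)
      set W' := W ⊓ LinearMap.ker (LinearMap.proj (R := ℝ) (φ := fun _ : Fin n => ℝ) j) with hW'
      have hlt : W' < W := by
        refine lt_of_le_of_ne inf_le_left ?_
        intro h
        have : x ∈ W' := h ▸ hxW
        exact hj (this.2)
      have hfr : Module.finrank ℝ W' ≤ k := by
        have := Submodule.finrank_lt_finrank_of_lt hlt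
        omega
      obtain ⟨S, hScard, hSsep⟩ := ih W' hfr
      refine ⟨insert j S, (Finset.card_insert_le _ _).trans (by omega), ?_⟩
      intro y hy hzero
      refine hSsep y ⟨hy, ?_⟩ fun c hc => hzero c (Finset.mem_insert_of_mem hc)
      exact hzero j (Finset.mem_insert_self _ _)

/-- for `1 ≤ m` and `m + 1 ≤ n`, every `M ∈ 𝓜_m(m,n)` has `m+1` columns
`j_1 < ⋯ < j_{m+1}` whose corresponding `m × (m+1)` submatrix lies in `𝓜_m(m, m+1)`. -/
theorem stmt17 (m n : ℕ) (h1 : 1 ≤ m) (h2 : m + 1 ≤ n)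
    (M : Fin m → Fin n → Bool) (hM : M ∈ MmSet m m n) :
    ∃ j : Fin (m + 1) → Fin n, StrictMono j ∧
      (fun i k => M i (j k)) ∈ MmSet m m (m + 1) := by
  rw [MmSet, Finset.mem_filter] at hM
  obtain ⟨-, hli, hpm⟩ := hM
  have hfr : Module.finrank ℝ
      (Submodule.span ℝ (Set.range fun i => signVec (M i))) ≤ m := by
    rw [finrank_span_eq_card hli]
    simp
  obtain ⟨S, hScard, hSsep⟩ := exists_finset_sep m _ hfr
  obtain ⟨T, hST, hTuniv, hTcard⟩ :=
    Finset.exists_subsuperset_card_eq (S.subset_univ) (hScard.trans m.le_succ)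
      (by simpa using h2)
  set j := T.orderEmbOfFin hTcard with hj
  have hjrange : ∀ c ∈ T, ∃ k, j k = c := by
    intro c hc
    have := Finset.range_orderEmbOfFin T hTcard
    have : c ∈ Set.range (j : Fin (m + 1) → Fin n) := by rw [hj, this]; exact hc
    exact this
  refine ⟨j, (T.orderEmbOfFin hTcard).strictMono, ?_⟩
  rw [MmSet, Finset.mem_filter]
  refine ⟨Finset.mem_univ _, ?_, ?_⟩
  · rw [Fintype.linearIndependent_iff]
    intro g hg
    have hx : (∑ i, g i • signVec (M i)) = 0 := by
      refine hSsep _ (Submodule.sum_mem _ fun i _ =>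
        Submodule.smul_mem _ _ (Submodule.subset_span ⟨i, rfl⟩)) ?_
      intro c hc
      obtain ⟨k, hk⟩ := hjrange c (hST hc)
      have := congrFun hg k
      simpa [hk, Finset.sum_apply, signVec] using this
    exact Fintype.linearIndependent_iff.mp hli g hx
  · obtain ⟨j', hj', α, hα, hpm'⟩ := hpm
    refine ⟨j', hj', α, hα, ?_⟩
    intro k
    have := hpm' (j k)
    simpa [Finset.sum_apply, signVec] using this
end
end
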